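/- Suppose Ranked Pairs accepts all edges of a directed path from τ_B to τ_A. Then no intermediate transaction τ on this path satisfies w(τ_A, τ) = 1 or w(τ, τ_B) = 1. That is, the path avoids the set R_{τ_A} of transactions that all voters rank after τ_A, and avoids the set P_{τ_B} of transactions that all voters rank before τ_B. -/

import Mathlib

/-- The fraction of the `n` voters (each voter `i` ranking transactions by the
injective rank function `rank i`) that rank `a` before `b`. -/
def voteWeight {V : Type*} (n : ℕ) (rank : Fin n → V → ℕ) (a b : V) : ℚ :=
  ((Finset.univ.filter (fun i : Fin n => rank i a < rank i b)).card : ℚ) / n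

/-- A set `H` of directed edges has a directed cycle. -/
def hasCycle {V : Type*} (H : Set (V × V)) : Prop :=
  ∃ v : V, Relation.TransGen (fun a b : V => (a, b) ∈ H) v v

/-- The greedy (Ranked Pairs) edge-selection process: iterate over the list of
edges, adding each edge to the accumulated set `H` unless doing so would create a
directed cycle in `H`. -/
noncomputable def greedy {V : Type*} : List (V × V) → Set (V × V) → Set (V × V)
  | [], H => H
  | e :: rest, H =>
      greedy rest
        (@ite _ (hasCycle (insert e H)) (Classical.propDecidable _) H (insert e H))

/-!
Every voter's ranking is a strict order, so the edges of weight `1` form an acyclic set; and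
since the list is sorted by non-increasing weight they come first. Hence the greedy process never
rejects them. An intermediate `τ` with `w(τA, τ) = 1` would give an accepted edge `τA → τ` closing
the accepted path `τ ⇝ τA` into a cycle, and `w(τ, τB) = 1` would likewise close `τB ⇝ τ`.
-/

open Relation

section VoteWeight

variable {V : Type*} {n : ℕ} {rank : Fin n → V → ℕ} {a b : V}

lemma voteWeight_le_one : voteWeight n rank a b ≤ 1 := by
  unfold voteWeight
  refine div_le_one_of_le₀ ?_ n.cast_nonneg
  exact_mod_cast (Finset.card_filter_le _ _).trans_eq (Finset.card_fin n)

lemma voteWeight_eq_one_iff :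
    voteWeight n rank a b = 1 ↔ 0 < n ∧ ∀ i, rank i a < rank i b := by
  rcases n.eq_zero_or_pos with rfl | hn
  · simp [voteWeight]
  · rw [voteWeight, div_eq_one_iff_eq (by exact_mod_cast hn.ne'), Nat.cast_inj, and_iff_right hn]
    simpa using Finset.card_filter_eq_iff (s := .univ) (p := fun i => rank i a < rank i b)

lemma not_hasCycle_voteWeight_eq_one :
    ¬ hasCycle {e : V × V | voteWeight n rank e.1 e.2 = 1} := by
  rintro ⟨v, hv⟩
  obtain ⟨c, hvc, -⟩ := TransGen.head'_iff.mp hv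
  let i : Fin n := ⟨0, (voteWeight_eq_one_iff.mp hvc).1⟩
  have hlt : TransGen (· < ·) (rank i v) (rank i v) :=
    hv.lift (rank i) fun _ _ h => (voteWeight_eq_one_iff.mp h).2 i
  rw [transGen_eq_self] at hlt
  exact lt_irrefl _ hlt

end VoteWeight

section Greedy

variable {V : Type*} {G H S : Set (V × V)}

lemma hasCycle.mono (hHS : H ⊆ S) (hH : hasCycle H) : hasCycle S := by
  obtain ⟨v, hv⟩ := hH
  exact ⟨v, TransGen.mono (fun _ _ h => hHS h) _ _ hv⟩

lemma not_hasCycle_empty : ¬ hasCycle (∅ : Set (V × V)) := by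
  rintro ⟨v, hv⟩
  obtain ⟨_, h, -⟩ := TransGen.head'_iff.mp hv
  exact h

lemma subset_greedy (L : List (V × V)) (H : Set (V × V)) : H ⊆ greedy L H := by
  induction L generalizing H with
  | nil => exact le_rfl
  | cons e rest ih =>
    rw [greedy]
    split
    · exact ih H
    · exact (Set.subset_insert e H).trans (ih _)

lemma not_hasCycle_greedy (L : List (V × V)) (hH : ¬ hasCycle H) : ¬ hasCycle (greedy L H) := by
  induction L generalizing H with
  | nil => exact hH
  | cons e rest ih =>
    rw [greedy]
    split
    · exact ih hH
    · next hc => exact ih hc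

/-- If the edges of `L` lying in the acyclic set `S` form an initial segment of `L`, then none of
them is rejected. -/
lemma mem_greedy_of_acyclic_initial_segment {L : List (V × V)} {e : V × V}
    (hS : ¬ hasCycle S) (hL : L.Pairwise fun f g => g ∈ S → f ∈ S) (hH : H ⊆ S)
    (he : e ∈ L) (heS : e ∈ S) : e ∈ greedy L H := by
  induction L generalizing H with
  | nil => cases he
  | cons f rest ih =>
    rw [List.pairwise_cons] at hL
    have hfS : f ∈ S := by
      rcases List.mem_cons.mp he with rfl | he
      · exact heS
      · exact hL.1 e he heS
    have hfH : insert f H ⊆ S := Set.insert_subset hfS hH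
    rw [greedy, if_neg fun hc => hS (hc.mono hfH)]
    rcases List.mem_cons.mp he with rfl | he
    · exact subset_greedy rest _ (Set.mem_insert e H)
    · exact ih hL.2 hfH he

lemma mem_greedy_of_voteWeight_eq_one {n : ℕ} {rank : Fin n → V → ℕ} {L : List (V × V)}
    (hsort : L.Pairwise fun e f => voteWeight n rank f.1 f.2 ≤ voteWeight n rank e.1 e.2)
    {a b : V} (hab : (a, b) ∈ L) (hw : voteWeight n rank a b = 1) : (a, b) ∈ greedy L ∅ :=
  mem_greedy_of_acyclic_initial_segment not_hasCycle_voteWeight_eq_one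
    (hsort.imp fun hle hf => le_antisymm voteWeight_le_one (hf ▸ hle))
    (Set.empty_subset _) hab hw

lemma notMem_of_reflTransGen (hG : ¬ hasCycle G) {a b : V}
    (hab : ReflTransGen (fun x y => (x, y) ∈ G) a b) : (b, a) ∉ G := fun hba =>
  hG ⟨b, TransGen.head' hba hab⟩

end Greedy

namespace List.IsChain

variable {V : Type*} {r : V → V → Prop} {p : List V} {a b : V}

lemma reflTransGen_of_head?_eq (h : p.IsChain r) (ha : p.head? = some a) (hb : b ∈ p) :
    ReflTransGen r a b :=
  h.induction (ReflTransGen r a ·) p (fun _ _ hxy hx => hx.tail hxy)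
    (fun hne => by rw [(List.head_eq_iff_head?_eq_some hne).mpr ha]) b hb

lemma reflTransGen_of_getLast?_eq (h : p.IsChain r) (hb : p.getLast? = some b) (ha : a ∈ p) :
    ReflTransGen r a b :=
  h.backwards_induction (ReflTransGen r · b) p (fun _ _ hxy hy => hy.head hxy)
    (fun hne => by rw [List.getLast_of_mem_getLast? hb]) a ha

end List.IsChain

theorem accepted_path_is_local_general {V : Type*} {n : ℕ}
    (rank : Fin n → V → ℕ)
    (L : List (V × V))
    (hmemL : ∀ a b : V, a ≠ b → (a, b) ∈ L)
    (hsort : L.Pairwise (fun e f => voteWeight n rank f.1 f.2 ≤ voteWeight n rank e.1 e.2))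
    (τA τB : V) (p : List V)
    (hhead : p.head? = some τB) (hlast : p.getLast? = some τA)
    (hpath : p.Chain' (fun a b : V => (a, b) ∈ greedy L ∅)) :
    ∀ τ ∈ p, τ ≠ τA → τ ≠ τB →
      voteWeight n rank τA τ ≠ 1 ∧ voteWeight n rank τ τB ≠ 1 := by
  intro τ hτ hτA hτB
  have hG : ¬ hasCycle (greedy L ∅) := not_hasCycle_greedy L not_hasCycle_empty
  refine ⟨fun hw => ?_, fun hw => ?_⟩
  · exact notMem_of_reflTransGen hG (hpath.reflTransGen_of_getLast?_eq hlast hτ)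
      (mem_greedy_of_voteWeight_eq_one hsort (hmemL τA τ (Ne.symm hτA)) hw)
  · exact notMem_of_reflTransGen hG (hpath.reflTransGen_of_head?_eq hhead hτ)
      (mem_greedy_of_voteWeight_eq_one hsort (hmemL τ τB hτB) hw)

/-- If Ranked Pairs accepts all edges of a directed path from `τB` to `τA`
(represented as a list `p` of vertices starting at `τB`, ending at `τA`, whose
consecutive pairs are accepted edges), then no intermediate transaction `τ` on the
path satisfies `w(τA, τ) = 1` (i.e. lies in `R_{τA}`) or `w(τ, τB) = 1` (i.e. lies
in `P_{τB}`). -/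
theorem accepted_path_is_local {V : Type*} [Fintype V] {n : ℕ} (hn : 0 < n)
    (rank : Fin n → V → ℕ) (hinj : ∀ i, Function.Injective (rank i))
    (L : List (V × V))
    (hmemL : ∀ a b : V, a ≠ b → (a, b) ∈ L)
    (hnd : L.Nodup)
    (hirr : ∀ e ∈ L, e.1 ≠ e.2)
    (hsort : L.Pairwise (fun e f => voteWeight n rank f.1 f.2 ≤ voteWeight n rank e.1 e.2))
    (τA τB : V) (p : List V)
    (hhead : p.head? = some τB) (hlast : p.getLast? = some τA)
    (hpath : p.Chain' (fun a b : V => (a, b) ∈ greedy L ∅)) :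
    ∀ τ ∈ p, τ ≠ τA → τ ≠ τB →
      voteWeight n rank τA τ ≠ 1 ∧ voteWeight n rank τ τB ≠ 1 :=
  accepted_path_is_local_general rank L hmemL hsort τA τB p hhead hlast hpath
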